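/- Let σ ∈ S_t and consider the vincular pattern (σ, [t−2]) = σ_1⋯σ_{t−1}-σ_t. Suppose π is a permutation of length n whose first t−1 letters are order-isomorphic to σ_1⋯σ_{t−1}, and there is NO index i ≥ t with π_1⋯π_{t−1}π_i order-isomorphic to σ. Then π avoids (σ,[t−2]) if and only if the reduction of π_2 π_3 ⋯ π_n avoids (σ,[t−2]). -/

import Mathlib

/-!
An occurrence of `σ₁⋯σ_{t-1}-σ_t` in `π` either avoids `π₁`, and then, shifted one position
to the left, is an occurrence in the reduction of `π₂⋯π_n` (deleting the first letter preserves
both relative order and adjacency of the remaining ones, and every occurrence there arises this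
way); or it uses `π₁`. In the second case, since its first `t-1` positions are consecutive, it
occupies positions `1, …, t-1` followed by a position `i ≥ t`, so `π₁⋯π_{t-1}π_i` would be
order-isomorphic to `σ`, which is excluded.
-/

/-- A set of vincular patterns: each pattern is a length `k`, a permutation of `Fin k`,
and a set of adjacency positions `X ⊆ {1,...,k-1}` (1-based). -/
abbrev PatSet := Set (Σ k : ℕ, Equiv.Perm (Fin k) × Finset ℕ)

/-- `π` contains the vincular pattern `(σ, X)`: there are strictly increasing positions
whose letters are order-isomorphic to `σ`, with positions `x` and `x+1` (1-based) adjacent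
for each `x ∈ X`. -/
def ContainsV {n k : ℕ} (π : Equiv.Perm (Fin n)) (σ : Equiv.Perm (Fin k))
    (X : Finset ℕ) : Prop :=
  ∃ i : Fin k → Fin n, StrictMono i ∧
    (∀ a b : Fin k, π (i a) < π (i b) ↔ σ a < σ b) ∧
    (∀ x ∈ X, ∀ (hx : x < k) (hx' : x - 1 < k),
      (i ⟨x, hx⟩ : ℕ) = (i ⟨x - 1, hx'⟩ : ℕ) + 1)

/-- The positions of the prefix indices `R` inside `Fin n`. -/
def prefIndices {n k : ℕ} (h : k ≤ n) (R : Finset (Fin k)) : Finset (Fin n) :=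
  R.map (Fin.castLEEmb h)

/-- The deletion map `d_R`: delete the letters of `π` at the (prefix) positions in `R`
and reduce, yielding a permutation of length `n - |R|`. -/
def deletePerm {n k : ℕ} (h : k ≤ n) (R : Finset (Fin k)) (π : Equiv.Perm (Fin n)) :
    Equiv.Perm (Fin (n - R.card)) :=
  ((prefIndices h R)ᶜ.orderIsoOfFin
      (by simp [prefIndices, Finset.card_compl])).toEquiv.trans
    ((π.subtypeEquiv (fun x => by
        simp [prefIndices, Finset.mem_compl, Finset.mem_image])).trans
      (((prefIndices h R).image π)ᶜ.orderIsoOfFin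
        (by simp [prefIndices, Finset.card_compl,
              Finset.card_image_of_injective _ π.injective])).toEquiv.symm)

/-- The sequence `π₁ ⋯ π_{t-1} π_i` of prefix positions extended by position `i`. -/
def extendAt {t n : ℕ} (h' : t - 1 ≤ n) (i : Fin n) (a : Fin t) : Fin n :=
  if ha : (a : ℕ) < t - 1 then Fin.castLE h' ⟨a, ha⟩ else i

def IsOccurrence {n k : ℕ} (π : Equiv.Perm (Fin n)) (σ : Equiv.Perm (Fin k))
    (X : Finset ℕ) (i : Fin k → Fin n) : Prop :=
  StrictMono i ∧ (∀ a b : Fin k, π (i a) < π (i b) ↔ σ a < σ b) ∧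
    (∀ x ∈ X, ∀ (hx : x < k) (hx' : x - 1 < k),
      (i ⟨x, hx⟩ : ℕ) = (i ⟨x - 1, hx'⟩ : ℕ) + 1)

theorem containsV_iff_exists_isOccurrence {n k : ℕ} (π : Equiv.Perm (Fin n))
    (σ : Equiv.Perm (Fin k)) (X : Finset ℕ) :
    ContainsV π σ X ↔ ∃ i, IsOccurrence π σ X i :=
  Iff.rfl

section Shift

variable {m n k : ℕ} {π : Equiv.Perm (Fin n)} {τ : Equiv.Perm (Fin m)}
  {σ : Equiv.Perm (Fin k)} {X : Finset ℕ}

theorem IsOccurrence.castLE_succ (hmn : m + 1 ≤ n)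
    (hτ : ∀ a b, τ a < τ b ↔ π (Fin.castLE hmn a.succ) < π (Fin.castLE hmn b.succ))
    {i : Fin k → Fin m} (hi : IsOccurrence τ σ X i) :
    IsOccurrence π σ X (fun a => Fin.castLE hmn (i a).succ) := by
  obtain ⟨hmono, hcmp, hadj⟩ := hi
  refine ⟨fun a b hab => ?_, fun a b => (hτ _ _).symm.trans (hcmp a b), fun x hx hxk hxk' => ?_⟩
  · exact (Fin.castLE_lt_castLE_iff hmn).2 (Fin.succ_lt_succ_iff.2 (hmono hab))
  · simp [hadj x hx hxk hxk']

theorem IsOccurrence.containsV_of_ne_zero (hmn : m + 1 = n)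
    (hτ : ∀ a b, τ a < τ b ↔ π (Fin.castLE hmn.le a.succ) < π (Fin.castLE hmn.le b.succ))
    {i : Fin k → Fin n} (hi : IsOccurrence π σ X i) (hi0 : ∀ a, (i a : ℕ) ≠ 0) :
    ContainsV τ σ X := by
  obtain ⟨hmono, hcmp, hadj⟩ := hi
  let j : Fin k → Fin m := fun a => ⟨(i a : ℕ) - 1, by have := (i a).isLt; have := hi0 a; omega⟩
  have hsucc : ∀ a, Fin.castLE hmn.le (j a).succ = i a := fun a => by
    ext; simp only [j, Fin.val_castLE, Fin.val_succ]; have := hi0 a; omega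
  refine ⟨j, fun a b hab => ?_, fun a b => ?_, fun x hx hxk hxk' => ?_⟩
  · have := hmono hab; have := hi0 a; simp only [j, Fin.lt_def] at *; omega
  · rw [hτ, hsucc, hsucc, hcmp]
  · have := hadj x hx hxk hxk'; have := hi0 ⟨x - 1, hxk'⟩; simp only [j]; omega

theorem containsV_iff_exists_isOccurrence_ne_zero (hmn : m + 1 = n)
    (hτ : ∀ a b, τ a < τ b ↔ π (Fin.castLE hmn.le a.succ) < π (Fin.castLE hmn.le b.succ)) :
    ContainsV τ σ X ↔ ∃ i, IsOccurrence π σ X i ∧ ∀ a, (i a : ℕ) ≠ 0 := by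
  constructor
  · rintro ⟨i, hi⟩
    exact ⟨_, IsOccurrence.castLE_succ hmn.le hτ hi, fun a => by simp⟩
  · rintro ⟨i, hi, hi0⟩
    exact hi.containsV_of_ne_zero hmn hτ hi0

end Shift

theorem sub_card_singleton_add_one {n : ℕ} (x : Fin n) :
    n - ({x} : Finset (Fin n)).card + 1 = n := by
  have := x.pos
  simp only [Finset.card_singleton]; omega

section DeleteFirst

variable {n : ℕ} (hn : 0 < n)

theorem orderEmbOfFin_compl_prefIndices_zero
    (h : (prefIndices (le_refl n) {(⟨0, hn⟩ : Fin n)})ᶜ.card =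
      n - ({(⟨0, hn⟩ : Fin n)} : Finset (Fin n)).card) :
    ⇑((prefIndices (le_refl n) {(⟨0, hn⟩ : Fin n)})ᶜ.orderEmbOfFin h) =
      fun a => Fin.castLE (sub_card_singleton_add_one _).le a.succ := by
  refine (Finset.orderEmbOfFin_unique h (fun a => ?_) fun a b hab => ?_).symm
  · simp only [prefIndices, Finset.map_singleton, Finset.mem_compl, Finset.mem_singleton]
    exact Fin.ne_of_val_ne (Nat.succ_ne_zero _)
  · exact (Fin.castLE_lt_castLE_iff _).2 (Fin.succ_lt_succ_iff.2 hab)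

theorem deletePerm_zero_lt_iff (π : Equiv.Perm (Fin n))
    (a b : Fin (n - ({(⟨0, hn⟩ : Fin n)} : Finset (Fin n)).card)) :
    deletePerm (le_refl n) {(⟨0, hn⟩ : Fin n)} π a <
        deletePerm (le_refl n) {(⟨0, hn⟩ : Fin n)} π b ↔
      π (Fin.castLE (sub_card_singleton_add_one _).le a.succ) <
        π (Fin.castLE (sub_card_singleton_add_one _).le b.succ) := by
  simp only [deletePerm, Equiv.trans_apply, RelIso.coe_fn_toEquiv, Equiv.subtypeEquiv_apply]
  rw [← OrderIso.toEquiv_symm, RelIso.coe_fn_toEquiv, OrderIso.lt_iff_lt, Subtype.mk_lt_mk,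
    Finset.coe_orderIsoOfFin_apply, Finset.coe_orderIsoOfFin_apply,
    orderEmbOfFin_compl_prefIndices_zero]

end DeleteFirst

section Consecutive

variable {n k r : ℕ} {π : Equiv.Perm (Fin n)} {σ : Equiv.Perm (Fin k)} {i : Fin k → Fin n}

theorem IsOccurrence.val_eq_add_of_le (hi : IsOccurrence π σ (Finset.Icc 1 r) i) :
    ∀ (a : Fin k), (a : ℕ) ≤ r → (i a : ℕ) = i ⟨0, a.pos⟩ + a := by
  rintro ⟨a, ha⟩ har
  induction a with
  | zero => rfl
  | succ a ih =>
    have har : a + 1 ≤ r := har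
    have hadj := hi.2.2 (a + 1) (Finset.mem_Icc.2 ⟨by omega, har⟩) ha (by omega)
    simp only [Nat.add_sub_cancel] at hadj
    rw [hadj, ih (by omega) (Nat.le_of_succ_le har)]
    rfl

theorem IsOccurrence.exists_extendAt {t : ℕ} {σ : Equiv.Perm (Fin t)} {i : Fin t → Fin n}
    (h' : t - 1 ≤ n) (hi : IsOccurrence π σ (Finset.Icc 1 (t - 2)) i)
    (hzero : ∃ a, (i a : ℕ) = 0) :
    ∃ j : Fin n, t - 1 ≤ (j : ℕ) ∧
      ∀ a b : Fin t, π (extendAt h' j a) < π (extendAt h' j b) ↔ σ a < σ b := by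
  obtain ⟨a₀, ha₀⟩ := hzero
  have ht : 0 < t := a₀.pos
  have hi0 : (i ⟨0, ht⟩ : ℕ) = 0 := by
    have := hi.1.monotone (Fin.le_def.2 (Nat.zero_le a₀) : (⟨0, ht⟩ : Fin t) ≤ a₀)
    rw [Fin.le_def] at this; omega
  have hprefix : ∀ a : Fin t, (a : ℕ) < t - 1 → (i a : ℕ) = a := fun a ha => by
    rw [hi.val_eq_add_of_le a (by omega), hi0, zero_add]
  set j := i ⟨t - 1, by omega⟩
  have hext : ∀ a, extendAt h' j a = i a := fun a => by
    unfold extendAt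
    split_ifs with ha
    · ext; simp [hprefix a ha]
    · exact congrArg i (Fin.ext (by simp only; omega))
  refine ⟨j, ?_, fun a b => by rw [hext, hext]; exact hi.2.1 a b⟩
  rcases Nat.lt_or_ge t 2 with ht2 | ht2
  · omega
  · have := hi.1 (show (⟨t - 2, by omega⟩ : Fin t) < ⟨t - 1, by omega⟩ from
      Fin.mk_lt_mk.2 (by omega))
    rw [Fin.lt_def, hprefix _ (by simp only; omega)] at this
    simp only at this; omega

end Consecutive

theorem stmt10_general {t n : ℕ} (hn : 0 < n) (h' : t - 1 ≤ n)
    (σ : Equiv.Perm (Fin t)) (π : Equiv.Perm (Fin n))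
    (hno : ∀ i : Fin n, t - 1 ≤ (i : ℕ) →
      ¬ ∀ a b : Fin t,
          π (extendAt h' i a) < π (extendAt h' i b) ↔ σ a < σ b) :
    (¬ ContainsV π σ (Finset.Icc 1 (t - 2)) ↔
      ¬ ContainsV (deletePerm (le_refl n) {(⟨0, hn⟩ : Fin n)} π) σ
          (Finset.Icc 1 (t - 2))) := by
  rw [containsV_iff_exists_isOccurrence_ne_zero (sub_card_singleton_add_one _)
    (deletePerm_zero_lt_iff hn π), containsV_iff_exists_isOccurrence]
  refine not_congr ⟨fun ⟨i, hi⟩ => ⟨i, hi, fun a ha => ?_⟩, fun ⟨i, hi, _⟩ => ⟨i, hi⟩⟩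
  obtain ⟨j, hj, hjσ⟩ := hi.exists_extendAt h' ⟨a, ha⟩
  exact hno j hj hjσ

/-- Suppose the first `t-1` letters of `π` are order-isomorphic to `σ₁⋯σ_{t-1}` and no
later letter completes them to a copy of `σ`.  Then `π` avoids `σ₁⋯σ_{t-1}-σ_t` iff the
reduction of `π₂⋯π_n` avoids it. -/
theorem stmt10 {t n : ℕ} (ht : 0 < t) (hn : 0 < n) (h' : t - 1 ≤ n)
    (σ : Equiv.Perm (Fin t)) (π : Equiv.Perm (Fin n))
    (hpre : ∀ a b : Fin (t - 1),
      π (Fin.castLE h' a) < π (Fin.castLE h' b) ↔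
        σ (Fin.castLE (Nat.sub_le t 1) a) < σ (Fin.castLE (Nat.sub_le t 1) b))
    (hno : ∀ i : Fin n, t - 1 ≤ (i : ℕ) →
      ¬ ∀ a b : Fin t,
          π (extendAt h' i a) < π (extendAt h' i b) ↔ σ a < σ b) :
    (¬ ContainsV π σ (Finset.Icc 1 (t - 2)) ↔
      ¬ ContainsV (deletePerm (le_refl n) {(⟨0, hn⟩ : Fin n)} π) σ
          (Finset.Icc 1 (t - 2))) :=
  stmt10_general hn h' σ π hno
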